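/- Let C ≥ 0 and let v : ℝ^d → ℝ be bounded, Lipschitz, and C-semiconvex, and let φ be its Hopf–Lax function for quadratic cost. Then for every t ∈ [0,1] and all x, z ∈ ℝ^d, φ(t, x+z) − 2φ(t,x) + φ(t, x−z) ≥ −C|z|². -/

import Mathlib

/- The quadratic cost depends only on `x - y`, so shifting any competitor `y` for `φ(t, x)` to
`y ± z` gives competitors for `φ(t, x ± z)` at the same cost; the second-difference lower bound
`v(y+z) - 2v(y) + v(y-z) ≥ -C|z|²` of a `C`-semiconvex `v` then passes to the supremum. -/

open Set

/-- The Hopf–Lax function for quadratic cost with terminal datum `v` at time `1`: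
`φ(t,x) = sup_y ( v(y) - |x-y|²/(2(1-t)) )` for `t < 1`, and `φ(1,x) = v(x)`. -/
noncomputable def hopfLax (d : ℕ) (v : EuclideanSpace ℝ (Fin d) → ℝ)
    (t : ℝ) (x : EuclideanSpace ℝ (Fin d)) : ℝ :=
  if t = 1 then v x
  else ⨆ y : EuclideanSpace ℝ (Fin d), (v y - ‖x - y‖ ^ 2 / (2 * (1 - t)))

theorem ConvexOn.two_mul_le_add_add_of_add_sq_norm {E : Type*} [NormedAddCommGroup E]
    [InnerProductSpace ℝ E] {v : E → ℝ} {C : ℝ}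
    (hsc : ConvexOn ℝ univ (fun x => v x + (C / 2) * ‖x‖ ^ 2)) (y z : E) :
    2 * v y ≤ v (y + z) + v (y - z) + C * ‖z‖ ^ 2 := by
  have hconv := hsc.2 (mem_univ (y + z)) (mem_univ (y - z))
    (by norm_num : (0 : ℝ) ≤ 1 / 2) (by norm_num : (0 : ℝ) ≤ 1 / 2) (by norm_num)
  have hmid : (1 / 2 : ℝ) • (y + z) + (1 / 2 : ℝ) • (y - z) = y := by module
  simp only [hmid, smul_eq_mul] at hconv
  have hpar := parallelogram_law_with_norm ℝ y z
  linear_combination 2 * hconv + (C / 2) * hpar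

theorem bddAbove_range_sub_comp_sub {E : Type*} [AddCommGroup E] {v k : E → ℝ}
    (hv : BddAbove (range v)) (hk : ∀ w, 0 ≤ k w) (x : E) :
    BddAbove (range fun y => v y - k (x - y)) := by
  obtain ⟨B, hB⟩ := hv
  refine ⟨B, ?_⟩
  rintro _ ⟨y, rfl⟩
  linarith [hB (mem_range_self y), hk (x - y)]

theorem two_mul_iSup_sub_comp_sub_le {E : Type*} [AddCommGroup E] {v k : E → ℝ} {c : ℝ}
    (x z : E) (hv : ∀ y, 2 * v y ≤ v (y + z) + v (y - z) + c)
    (hadd : BddAbove (range fun y => v y - k (x + z - y)))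
    (hsub : BddAbove (range fun y => v y - k (x - z - y))) :
    2 * ⨆ y, (v y - k (x - y)) ≤
      (⨆ y, (v y - k (x + z - y))) + (⨆ y, (v y - k (x - z - y))) + c := by
  rw [← le_div_iff₀' two_pos]
  refine ciSup_le fun y => ?_
  have hle_add := le_ciSup hadd (y + z)
  have hle_sub := le_ciSup hsub (y - z)
  simp only [add_sub_add_right_eq_sub, sub_sub_sub_cancel_right] at hle_add hle_sub
  linarith [hv y]

theorem hopfLax_semiconvex_general
    (d : ℕ) (C : ℝ)
    (v : EuclideanSpace ℝ (Fin d) → ℝ) (B : ℝ)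
    (hB : ∀ x, |v x| ≤ B)
    (hsc : ConvexOn ℝ univ (fun x => v x + (C / 2) * ‖x‖ ^ 2)) :
    ∀ t ∈ Icc (0 : ℝ) 1, ∀ x z : EuclideanSpace ℝ (Fin d),
      hopfLax d v t (x + z) - 2 * hopfLax d v t x + hopfLax d v t (x - z)
        ≥ -C * ‖z‖ ^ 2 := by
  intro t ht x z
  have hmid := hsc.two_mul_le_add_add_of_add_sq_norm
  rcases ht.2.eq_or_lt with rfl | ht1
  · simp only [hopfLax, if_true]
    linarith [hmid x z]
  · have hv : BddAbove (range v) := ⟨B, by rintro _ ⟨y, rfl⟩; exact (abs_le.mp (hB y)).2⟩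
    have hk : ∀ w : EuclideanSpace ℝ (Fin d), 0 ≤ ‖w‖ ^ 2 / (2 * (1 - t)) :=
      fun w => div_nonneg (by positivity) (by linarith)
    have hsup := two_mul_iSup_sub_comp_sub_le (k := fun w => ‖w‖ ^ 2 / (2 * (1 - t))) x z (hmid · z)
      (bddAbove_range_sub_comp_sub hv hk (x + z)) (bddAbove_range_sub_comp_sub hv hk (x - z))
    simp only [hopfLax, if_neg ht1.ne]
    linarith

/-- If `v` is bounded, Lipschitz and `C`-semiconvex (i.e.
`x ↦ v(x) + (C/2)|x|²` is convex), then for every `t ∈ [0,1]` the Hopf–Lax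
function satisfies `φ(t,x+z) - 2φ(t,x) + φ(t,x-z) ≥ -C|z|²`. -/
theorem hopfLax_semiconvex
    (d : ℕ) (C : ℝ) (hC : 0 ≤ C)
    (v : EuclideanSpace ℝ (Fin d) → ℝ) (B : ℝ) (L : NNReal)
    (hB : ∀ x, |v x| ≤ B) (hL : LipschitzWith L v)
    (hsc : ConvexOn ℝ univ (fun x => v x + (C / 2) * ‖x‖ ^ 2)) :
    ∀ t ∈ Icc (0 : ℝ) 1, ∀ x z : EuclideanSpace ℝ (Fin d),
      hopfLax d v t (x + z) - 2 * hopfLax d v t x + hopfLax d v t (x - z)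
        ≥ -C * ‖z‖ ^ 2 :=
  hopfLax_semiconvex_general d C v B hB hsc
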